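/- Let α, δ ∈ ℝ, β > 0, and let λ ≥ 0 satisfy λ = 0 if α² + 3βδ > 0 and λ > 2√(−(α² + 3βδ))/(3β) if α² + 3βδ ≤ 0. Set c₋ := (α − √(3β²λ² + α² + 3βδ))/(3β), s(m) := √(3(m − α/(3β))² − (α² + 3βδ)/(3β²)) for m ≤ c₋, p(m; z) := e^{−z·s(m)}, and φ(m; x, y, t) := m(x − y) + t(−8βm³ + 8αm² + 2(δ − α²/β)m − αδ/β). Define K(x, y, z, t) := ∫_{−∞}^{c₋} e^{iφ(m; x, y, t)} p(m; z) dm for x, z > 0 and y, t ∈ ℝ. Then there exists a constant C > 0, depending only on α, β, δ, λ, such that |K(x, y, z, t)| ≤ C |t|^{−1/3} for all x, z > 0, y ∈ ℝ, and t ≠ 0. -/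

import Mathlib

open MeasureTheory

/-- `c₋ = (α − √(3β²λ² + α² + 3βδ))/(3β)`. -/
noncomputable def cMinus (α β δ lam : ℝ) : ℝ :=
  (α - Real.sqrt (3 * β ^ 2 * lam ^ 2 + α ^ 2 + 3 * β * δ)) / (3 * β)

/-- `s(m) = √(3(m − α/(3β))² − (α² + 3βδ)/(3β²))`. -/
noncomputable def sHNLS (α β δ : ℝ) (m : ℝ) : ℝ :=
  Real.sqrt (3 * (m - α / (3 * β)) ^ 2 - (α ^ 2 + 3 * β * δ) / (3 * β ^ 2))

/-- The phase `φ(m; x, y, t) = m(x − y) + t(−8βm³ + 8αm² + 2(δ − α²/β)m − αδ/β)`. -/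
noncomputable def phaseHNLS (α β δ : ℝ) (m x y t : ℝ) : ℝ :=
  m * (x - y) + t * (-8 * β * m ^ 3 + 8 * α * m ^ 2 + 2 * (δ - α ^ 2 / β) * m - α * δ / β)

/-- The oscillatory kernel `K(x, y, z, t) = ∫_{−∞}^{c₋} e^{iφ(m;x,y,t)} e^{−z·s(m)} dm`. -/
noncomputable def kernelHNLS (α β δ lam : ℝ) (x y z t : ℝ) : ℂ :=
  ∫ m in Set.Iic (cMinus α β δ lam),
    Complex.exp (Complex.I * (phaseHNLS α β δ m x y t : ℂ)) *
      ((Real.exp (-(z * sHNLS α β δ m)) : ℝ) : ℂ)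

open Set Filter Topology Complex ComplexConjugate

/-!
The phase `m ↦ φ(m; x, y, t)` is a cubic with `φ''' = -48βt`, so van der Corput's lemma of order
three bounds `∫_a^b e^{iφ}` by `18 (48β|t|)^{-1/3}` on every interval, uniformly in `x` and `y`
(order one is an integration by parts; order `k + 1` reduces to order `k` off a short interval
on which `φ⁽ᵏ⁾` is small). On `(-∞, c₋]` the weight `p = e^{-z s}` is
increasing, because `c₋` lies left of the vertex `α/(3β)` of the parabola under the root; it is
at most `1`, and integrable because `s(m) ≥ c₋ - m`. Writing `p(m) = ∫₀^{p(c₋)} 1_{τ ≤ p(m)} dτ`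
turns `K` into an average over `τ` of oscillatory integrals over the superlevel intervals
`{p ≥ τ} = [w_τ, c₋]`, each bounded as above.
-/

section VanDerCorput

variable {φ φ' φ'' φ''' : ℝ → ℝ} {a b : ℝ}

lemma norm_cexp_I_mul_ofReal (x : ℝ) : ‖cexp (I * x)‖ = 1 := by
  rw [mul_comm]; exact norm_exp_ofReal_mul_I x

lemma norm_integral_cexp_neg (φ : ℝ → ℝ) (a b : ℝ) :
    ‖∫ x in a..b, cexp (I * ↑(-φ x))‖ = ‖∫ x in a..b, cexp (I * φ x)‖ := by
  have hconj : ∀ x, cexp (I * ↑(-φ x)) = conj (cexp (I * φ x)) := fun x => by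
    rw [← exp_conj, map_mul, conj_I, conj_ofReal]; push_cast; ring_nf
  simp only [hconj, intervalIntegral, integral_conj, ← map_sub, RCLike.norm_conj]

lemma integral_abs_eq_abs_sub_of_hasDerivAt {g g' : ℝ → ℝ} (hab : a ≤ b)
    (hg : ∀ x ∈ Icc a b, HasDerivAt g (g' x) x) (hg' : IntervalIntegrable g' volume a b)
    (hsign : (∀ x ∈ Icc a b, 0 ≤ g' x) ∨ ∀ x ∈ Icc a b, g' x ≤ 0) :
    ∫ x in a..b, |g' x| = |g b - g a| := by
  rw [← intervalIntegral.integral_eq_sub_of_hasDerivAt (by rwa [uIcc_of_le hab]) hg']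
  rcases hsign with h | h
  · rw [abs_of_nonneg (intervalIntegral.integral_nonneg hab h)]
    exact intervalIntegral.integral_congr fun x hx =>
      abs_of_nonneg (h x (by rwa [uIcc_of_le hab] at hx))
  · have h' : 0 ≤ ∫ x in a..b, -g' x :=
      intervalIntegral.integral_nonneg hab fun x hx => neg_nonneg.2 (h x hx)
    rw [intervalIntegral.integral_neg] at h'
    rw [abs_of_nonpos (neg_nonneg.1 h'), ← intervalIntegral.integral_neg]
    exact intervalIntegral.integral_congr fun x hx =>
      abs_of_nonpos (h x (by rwa [uIcc_of_le hab] at hx))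

lemma integral_cexp_eq_by_parts (hφ : ∀ x, HasDerivAt φ (φ' x) x)
    (hφ' : ∀ x, HasDerivAt φ' (φ'' x) x) (hφ''c : Continuous φ'') (hab : a ≤ b)
    (hne : ∀ x ∈ Icc a b, φ' x ≠ 0) :
    ∫ x in a..b, cexp (I * φ x) =
      -I * ((φ' b)⁻¹ : ℝ) * cexp (I * φ b) - -I * ((φ' a)⁻¹ : ℝ) * cexp (I * φ a)
        - ∫ x in a..b, -I * ((-φ'' x / φ' x ^ 2 : ℝ) : ℂ) * cexp (I * φ x) := by
  have hIcc : uIcc a b = Icc a b := uIcc_of_le hab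
  have hφc : Continuous φ := continuous_iff_continuousAt.2 fun x => (hφ x).continuousAt
  have hφ'c : Continuous φ' := continuous_iff_continuousAt.2 fun x => (hφ' x).continuousAt
  have hg'c : ContinuousOn (fun x => -φ'' x / φ' x ^ 2) (uIcc a b) := hIcc ▸
    hφ''c.neg.continuousOn.div (hφ'c.pow 2).continuousOn fun x hx => pow_ne_zero 2 (hne x hx)
  rw [← intervalIntegral.integral_mul_deriv_eq_deriv_mul
    (u := fun x => -I * ((φ' x)⁻¹ : ℝ)) (v' := fun x => cexp (I * φ x) * (I * φ' x))
    (fun x hx => (((hφ' x).inv (hne x (hIcc ▸ hx))).ofReal_comp).const_mul (-I))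
    (fun x _ => (((hφ x).ofReal_comp).const_mul I).cexp)
    ((continuous_ofReal.comp_continuousOn hg'c).const_smul (-I)).intervalIntegrable
    (by apply Continuous.intervalIntegrable; fun_prop)]
  refine intervalIntegral.integral_congr fun x hx => ?_
  have : (φ' x : ℂ) ≠ 0 := ofReal_ne_zero.2 (hne x (hIcc ▸ hx))
  push_cast
  field_simp
  ring_nf
  rw [I_sq]; ring

theorem norm_integral_cexp_le_of_le_deriv (hφ : ∀ x, HasDerivAt φ (φ' x) x)
    (hφ' : ∀ x, HasDerivAt φ' (φ'' x) x) (hφ''c : Continuous φ'') {κ : ℝ} (hab : a ≤ b)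
    (hκ : 0 < κ) (hκφ' : ∀ x ∈ Icc a b, κ ≤ φ' x)
    (hsign : (∀ x ∈ Icc a b, 0 ≤ φ'' x) ∨ ∀ x ∈ Icc a b, φ'' x ≤ 0) :
    ‖∫ x in a..b, cexp (I * φ x)‖ ≤ 3 / κ := by
  have hpos : ∀ x ∈ Icc a b, 0 < φ' x := fun x hx => hκ.trans_le (hκφ' x hx)
  have hinv : ∀ x ∈ Icc a b, 0 < (φ' x)⁻¹ ∧ (φ' x)⁻¹ ≤ 1 / κ := fun x hx =>
    ⟨inv_pos.2 (hpos x hx), one_div κ ▸ inv_anti₀ hκ (hκφ' x hx)⟩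
  have hbdry : ∀ x ∈ Icc a b, ‖-I * ((φ' x)⁻¹ : ℝ) * cexp (I * φ x)‖ ≤ 1 / κ := fun x hx => by
    rw [norm_mul, norm_cexp_I_mul_ofReal, norm_mul, norm_neg, norm_I, norm_real, Real.norm_eq_abs,
      abs_of_pos (hinv x hx).1, one_mul, mul_one]
    exact (hinv x hx).2
  have hφ'c : Continuous φ' := continuous_iff_continuousAt.2 fun x => (hφ' x).continuousAt
  have hg'c : ContinuousOn (fun x => -φ'' x / φ' x ^ 2) (uIcc a b) := uIcc_of_le hab ▸
    hφ''c.neg.continuousOn.div (hφ'c.pow 2).continuousOn fun x hx => pow_ne_zero 2 (hpos x hx).ne'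
  -- the remainder is the total variation of the monotone function `1 / φ'`
  have hrem : ‖∫ x in a..b, -I * ((-φ'' x / φ' x ^ 2 : ℝ) : ℂ) * cexp (I * φ x)‖ ≤ 1 / κ := by
    calc _ ≤ ∫ x in a..b, |-φ'' x / φ' x ^ 2| := by
          refine intervalIntegral.norm_integral_le_of_norm_le hab (ae_of_all _ fun x _ => ?_) ?_
          · rw [norm_mul, norm_cexp_I_mul_ofReal, norm_mul, norm_neg, norm_I, norm_real]
            simp [abs_div]
          · exact (hg'c.intervalIntegrable).abs
      _ = |(φ' b)⁻¹ - (φ' a)⁻¹| := by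
          refine integral_abs_eq_abs_sub_of_hasDerivAt hab
            (fun x hx => (hφ' x).inv (hpos x hx).ne') hg'c.intervalIntegrable ?_
          rcases hsign with h | h
          · exact Or.inr fun x hx =>
              div_nonpos_of_nonpos_of_nonneg (neg_nonpos.2 (h x hx)) (sq_nonneg _)
          · exact Or.inl fun x hx => div_nonneg (neg_nonneg.2 (h x hx)) (sq_nonneg _)
      _ ≤ 1 / κ := by
          have ha := hinv a ⟨le_rfl, hab⟩
          have hb := hinv b ⟨hab, le_rfl⟩
          rw [abs_sub_le_iff]; constructor <;> linarith
  rw [integral_cexp_eq_by_parts hφ hφ' hφ''c hab fun x hx => (hpos x hx).ne']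
  calc _ ≤ ‖-I * ((φ' b)⁻¹ : ℝ) * cexp (I * φ b)‖ + ‖-I * ((φ' a)⁻¹ : ℝ) * cexp (I * φ a)‖
          + ‖∫ x in a..b, -I * ((-φ'' x / φ' x ^ 2 : ℝ) : ℂ) * cexp (I * φ x)‖ :=
        (norm_sub_le _ _).trans (by gcongr; exact norm_sub_le _ _)
    _ ≤ 1 / κ + 1 / κ + 1 / κ :=
        add_le_add_three (hbdry b ⟨hab, le_rfl⟩) (hbdry a ⟨le_rfl, hab⟩) hrem
    _ = 3 / κ := by ring

theorem norm_integral_cexp_le_of_le_abs_deriv (hφ : ∀ x, HasDerivAt φ (φ' x) x)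
    (hφ' : ∀ x, HasDerivAt φ' (φ'' x) x) (hφ''c : Continuous φ'') {κ : ℝ} (hab : a ≤ b)
    (hκ : 0 < κ) (hκφ' : (∀ x ∈ Icc a b, κ ≤ φ' x) ∨ ∀ x ∈ Icc a b, φ' x ≤ -κ)
    (hsign : (∀ x ∈ Icc a b, 0 ≤ φ'' x) ∨ ∀ x ∈ Icc a b, φ'' x ≤ 0) :
    ‖∫ x in a..b, cexp (I * φ x)‖ ≤ 3 / κ := by
  rcases hκφ' with h | h
  · exact norm_integral_cexp_le_of_le_deriv hφ hφ' hφ''c hab hκ h hsign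
  · rw [← norm_integral_cexp_neg]
    exact norm_integral_cexp_le_of_le_deriv (fun x => (hφ x).neg) (fun x => (hφ' x).neg)
      hφ''c.neg hab hκ (fun x hx => le_neg.2 (h x hx))
      (hsign.symm.imp (fun h x hx => neg_nonneg.2 (h x hx)) fun h x hx => neg_nonpos.2 (h x hx))

lemma mul_sub_le_sub_of_le_hasDerivAt {g g' : ℝ → ℝ} {K : ℝ} (hg : ∀ x, HasDerivAt g (g' x) x)
    (hK : ∀ x ∈ Icc a b, K ≤ g' x) {u v : ℝ} (hu : u ∈ Icc a b) (hv : v ∈ Icc a b)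
    (huv : u ≤ v) : K * (v - u) ≤ g v - g u :=
  (convex_Icc a b).mul_sub_le_image_sub_of_le_deriv
    (fun x _ => (hg x).continuousAt.continuousWithinAt)
    (fun x _ => (hg x).differentiableAt.differentiableWithinAt)
    (fun x hx => (hg x).deriv ▸ hK x (interior_subset hx)) u hu v hv huv

lemma exists_forall_le_neg_and_forall_le_of_le_deriv {g g' : ℝ → ℝ} {K r : ℝ}
    (hg : ∀ x, HasDerivAt g (g' x) x) (hab : a ≤ b) (hK : ∀ x ∈ Icc a b, K ≤ g' x) (hK0 : 0 ≤ K)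
    (hr : 0 < r) :
    ∃ c ∈ Icc a b, (∀ x ∈ Icc a b, x ≤ c - r → g x ≤ -(K * r)) ∧
      ∀ x ∈ Icc a b, c + r ≤ x → K * r ≤ g x := by
  have hleft : ∀ c ∈ Icc a b, g c ≤ 0 → ∀ x ∈ Icc a b, x ≤ c - r → g x ≤ -(K * r) :=
    fun c hc hgc x hx hxc => by
      have := mul_sub_le_sub_of_le_hasDerivAt hg hK hx hc (by linarith)
      nlinarith
  have hright : ∀ c ∈ Icc a b, 0 ≤ g c → ∀ x ∈ Icc a b, c + r ≤ x → K * r ≤ g x :=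
    fun c hc hgc x hx hcx => by
      have := mul_sub_le_sub_of_le_hasDerivAt hg hK hc hx (by linarith)
      nlinarith
  have hcont : ContinuousOn g (Icc a b) := fun x _ => (hg x).continuousAt.continuousWithinAt
  by_cases ha : 0 ≤ g a
  · exact ⟨a, left_mem_Icc.2 hab, fun x hx hxa => by linarith [hx.1], hright a ⟨le_rfl, hab⟩ ha⟩
  by_cases hb : g b ≤ 0
  · exact ⟨b, right_mem_Icc.2 hab, hleft b ⟨hab, le_rfl⟩ hb, fun x hx hbx => by linarith [hx.2]⟩
  obtain ⟨c, hc, hgc⟩ := intermediate_value_Icc hab hcont ⟨(not_le.1 ha).le, (not_le.1 hb).le⟩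
  exact ⟨c, hc, hleft c hc hgc.le, hright c hc hgc.ge⟩

theorem norm_integral_le_split_of_le_deriv {f : ℝ → ℂ} {g g' : ℝ → ℝ} {K r A : ℝ}
    (hf : Continuous f) (hf1 : ∀ x, ‖f x‖ ≤ 1) (hg : ∀ x, HasDerivAt g (g' x) x) (hab : a ≤ b)
    (hK : ∀ x ∈ Icc a b, K ≤ g' x) (hK0 : 0 ≤ K) (hr : 0 < r) (hA : 0 ≤ A)
    (hpiece : ∀ u v, a ≤ u → u ≤ v → v ≤ b →
      ((∀ x ∈ Icc u v, g x ≤ -(K * r)) ∨ ∀ x ∈ Icc u v, K * r ≤ g x) →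
        ‖∫ x in u..v, f x‖ ≤ A) :
    ‖∫ x in a..b, f x‖ ≤ 2 * A + 2 * r := by
  obtain ⟨c, hc, hleft, hright⟩ :=
    exists_forall_le_neg_and_forall_le_of_le_deriv hg hab hK hK0 hr
  set a' := max a (c - r)
  set b' := min b (c + r)
  have haa' : a ≤ a' := le_max_left _ _
  have ha'b' : a' ≤ b' :=
    max_le (le_min hab (by linarith [hc.1])) (le_min (by linarith [hc.2]) (by linarith))
  have hb'b : b' ≤ b := min_le_left _ _
  have hint : ∀ u v, IntervalIntegrable f volume u v := hf.intervalIntegrable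
  have h₁ : ‖∫ x in a..a', f x‖ ≤ A := by
    rcases le_total (c - r) a with h | h
    · rw [show a' = a from max_eq_left h, intervalIntegral.integral_same, norm_zero]; exact hA
    · exact hpiece a a' le_rfl haa' (ha'b'.trans hb'b) <| Or.inl fun x hx =>
        hleft x ⟨hx.1, hx.2.trans (ha'b'.trans hb'b)⟩ (hx.2.trans (max_eq_right h).le)
  have h₂ : ‖∫ x in a'..b', f x‖ ≤ 2 * r := by
    refine (intervalIntegral.norm_integral_le_of_norm_le_const fun x _ => hf1 x).trans ?_
    rw [one_mul, abs_of_nonneg (sub_nonneg.2 ha'b')]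
    linarith [min_le_right b (c + r), le_max_right a (c - r)]
  have h₃ : ‖∫ x in b'..b, f x‖ ≤ A := by
    rcases le_total b (c + r) with h | h
    · rw [show b' = b from min_eq_left h, intervalIntegral.integral_same, norm_zero]; exact hA
    · exact hpiece b' b (haa'.trans ha'b') hb'b le_rfl <| Or.inr fun x hx =>
        hright x ⟨(haa'.trans ha'b').trans hx.1, hx.2⟩ ((min_eq_right h).ge.trans hx.1)
  rw [← intervalIntegral.integral_add_adjacent_intervals (hint a a') (hint a' b),
    ← intervalIntegral.integral_add_adjacent_intervals (hint a' b') (hint b' b)]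
  calc _ ≤ ‖∫ x in a..a', f x‖ + (‖∫ x in a'..b', f x‖ + ‖∫ x in b'..b, f x‖) :=
        (norm_add_le _ _).trans (add_le_add le_rfl (norm_add_le _ _))
    _ ≤ A + (2 * r + A) := add_le_add h₁ (add_le_add h₂ h₃)
    _ = 2 * A + 2 * r := by ring

theorem norm_integral_cexp_le_of_sq_le_deriv2 (hφ : ∀ x, HasDerivAt φ (φ' x) x)
    (hφ' : ∀ x, HasDerivAt φ' (φ'' x) x) (hφ''c : Continuous φ'') {μ : ℝ} (hab : a ≤ b)
    (hμ : 0 < μ) (hμφ'' : ∀ x ∈ Icc a b, μ ^ 2 ≤ φ'' x) :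
    ‖∫ x in a..b, cexp (I * φ x)‖ ≤ 8 / μ := by
  have hKr : μ ^ 2 * (1 / μ) = μ := by field_simp
  have hφc : Continuous φ := continuous_iff_continuousAt.2 fun x => (hφ x).continuousAt
  refine (norm_integral_le_split_of_le_deriv (r := 1 / μ) (A := 3 / μ) (by fun_prop)
    (fun x => (norm_cexp_I_mul_ofReal _).le) hφ' hab hμφ'' (sq_nonneg μ) (by positivity)
    (by positivity) fun u v hau huv hvb hpiece => ?_).trans_eq (by ring)
  rw [hKr] at hpiece
  exact norm_integral_cexp_le_of_le_abs_deriv hφ hφ' hφ''c huv hμ hpiece.symm <|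
    Or.inl fun x hx => (sq_nonneg μ).trans (hμφ'' x ⟨hau.trans hx.1, hx.2.trans hvb⟩)

theorem norm_integral_cexp_le_of_sq_le_abs_deriv2 (hφ : ∀ x, HasDerivAt φ (φ' x) x)
    (hφ' : ∀ x, HasDerivAt φ' (φ'' x) x) (hφ''c : Continuous φ'') {μ : ℝ} (hab : a ≤ b)
    (hμ : 0 < μ) (hμφ'' : (∀ x ∈ Icc a b, μ ^ 2 ≤ φ'' x) ∨ ∀ x ∈ Icc a b, φ'' x ≤ -μ ^ 2) :
    ‖∫ x in a..b, cexp (I * φ x)‖ ≤ 8 / μ := by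
  rcases hμφ'' with h | h
  · exact norm_integral_cexp_le_of_sq_le_deriv2 hφ hφ' hφ''c hab hμ h
  · rw [← norm_integral_cexp_neg]
    exact norm_integral_cexp_le_of_sq_le_deriv2 (fun x => (hφ x).neg) (fun x => (hφ' x).neg)
      hφ''c.neg hab hμ fun x hx => le_neg.2 (h x hx)

theorem norm_integral_cexp_le_of_le_deriv3 (hφ : ∀ x, HasDerivAt φ (φ' x) x)
    (hφ' : ∀ x, HasDerivAt φ' (φ'' x) x) (hφ'' : ∀ x, HasDerivAt φ'' (φ''' x) x) {B : ℝ}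
    (hab : a ≤ b) (hB : 0 < B) (hBφ''' : ∀ x ∈ Icc a b, B ≤ φ''' x) :
    ‖∫ x in a..b, cexp (I * φ x)‖ ≤ 18 * B ^ (-(1 : ℝ) / 3) := by
  set μ := B ^ ((1 : ℝ) / 3)
  have hμ : 0 < μ := Real.rpow_pos_of_pos hB _
  have hKr : B * (1 / μ) = μ ^ 2 := by
    have hμ3 : μ ^ 3 = B := by
      rw [← Real.rpow_natCast, ← Real.rpow_mul hB.le]; norm_num
    rw [← hμ3]; field_simp
  have hφc : Continuous φ := continuous_iff_continuousAt.2 fun x => (hφ x).continuousAt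
  have hφ''c : Continuous φ'' := continuous_iff_continuousAt.2 fun x => (hφ'' x).continuousAt
  refine (norm_integral_le_split_of_le_deriv (r := 1 / μ) (A := 8 / μ) (by fun_prop)
    (fun x => (norm_cexp_I_mul_ofReal _).le) hφ'' hab hBφ''' hB.le (by positivity)
    (by positivity) fun u v _ huv _ hpiece => ?_).trans_eq ?_
  · rw [hKr] at hpiece
    exact norm_integral_cexp_le_of_sq_le_abs_deriv2 hφ hφ' hφ''c huv hμ hpiece.symm
  · rw [neg_div, Real.rpow_neg hB.le]; ring

theorem norm_integral_cexp_le_of_le_abs_deriv3 (hφ : ∀ x, HasDerivAt φ (φ' x) x)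
    (hφ' : ∀ x, HasDerivAt φ' (φ'' x) x) (hφ'' : ∀ x, HasDerivAt φ'' (φ''' x) x) {B : ℝ}
    (hab : a ≤ b) (hB : 0 < B)
    (hBφ''' : (∀ x ∈ Icc a b, B ≤ φ''' x) ∨ ∀ x ∈ Icc a b, φ''' x ≤ -B) :
    ‖∫ x in a..b, cexp (I * φ x)‖ ≤ 18 * B ^ (-(1 : ℝ) / 3) := by
  rcases hBφ''' with h | h
  · exact norm_integral_cexp_le_of_le_deriv3 hφ hφ' hφ'' hab hB h
  · rw [← norm_integral_cexp_neg]
    exact norm_integral_cexp_le_of_le_deriv3 (fun x => (hφ x).neg) (fun x => (hφ' x).neg)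
      (fun x => (hφ'' x).neg) hab hB fun x hx => le_neg.2 (h x hx)

end VanDerCorput

section LayerCake

theorem integral_mul_eq_integral_setIntegral_superlevel {X : Type*} [MeasurableSpace X]
    {μ : Measure X} [SFinite μ] {f : X → ℂ} {p : X → ℝ} (hf : AEStronglyMeasurable f μ)
    (hp : Measurable p) (hp0 : ∀ x, 0 ≤ p x) (hfp : Integrable (fun x => f x * p x) μ) :
    ∫ x, f x * p x ∂μ = ∫ τ, ∫ x in {x | τ ∈ Ioc 0 (p x)}, f x ∂μ := by
  set A : Set (X × ℝ) := {q | q.2 ∈ Ioc 0 (p q.1)}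
  set F : X × ℝ → ℂ := A.indicator fun q => f q.1
  have hA : MeasurableSet A := (measurableSet_lt measurable_const measurable_snd).inter
    (measurableSet_le measurable_snd (hp.comp measurable_fst))
  have hslice (x τ) : F (x, τ) = (Ioc 0 (p x)).indicator (fun _ => f x) τ := rfl
  have hinner (x : X) : ∫ τ, F (x, τ) = f x * p x := by
    simp only [hslice]
    rw [integral_indicator_const _ measurableSet_Ioc, Real.volume_real_Ioc_of_le (hp0 x),
      sub_zero, real_smul, mul_comm]
  have hFint : Integrable F (μ.prod volume) := by
    refine (integrable_prod_iff (hf.comp_fst.indicator hA)).2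
      ⟨ae_of_all _ fun x => ?_, hfp.norm.congr (ae_of_all _ fun x => ?_)⟩
    · change Integrable (fun τ => F (x, τ)) volume
      simp only [hslice]
      exact (integrable_indicator_iff measurableSet_Ioc).2
        (integrableOn_const measure_Ioc_lt_top.ne)
    · change ‖f x * p x‖ = ∫ τ, ‖F (x, τ)‖
      simp only [hslice, norm_indicator_eq_indicator_norm]
      rw [integral_indicator_const _ measurableSet_Ioc, Real.volume_real_Ioc_of_le (hp0 x),
        sub_zero, smul_eq_mul, norm_mul, norm_real, Real.norm_of_nonneg (hp0 x), mul_comm]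
  calc ∫ x, f x * p x ∂μ = ∫ x, (∫ τ, F (x, τ)) ∂μ := by simp only [hinner]
    _ = ∫ τ, ∫ x, F (x, τ) ∂μ := integral_integral_swap hFint
    _ = ∫ τ, ∫ x in {x | τ ∈ Ioc 0 (p x)}, f x ∂μ := by
        congr 1; funext τ
        exact integral_indicator
          ((MeasurableSet.const (0 < τ)).inter (measurableSet_le measurable_const hp))

variable {p : ℝ → ℝ} {L : ℝ}

lemma exists_Icc_eq_setOf_le_inter_Iic (hp : Continuous p) (hmono : MonotoneOn p (Iic L))
    (hlim : Tendsto p atBot (𝓝 0)) {τ : ℝ} (hτ : 0 < τ) (hτL : τ ≤ p L) :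
    ∃ w ≤ L, {x | τ ≤ p x} ∩ Iic L = Icc w L := by
  set S := {x | τ ≤ p x} ∩ Iic L
  have hclosed : IsClosed S := (isClosed_le continuous_const hp).inter isClosed_Iic
  have hbdd : BddBelow S := by
    obtain ⟨M, hM⟩ := eventually_atBot.1 (hlim.eventually_lt_const hτ)
    exact ⟨M, fun x hx => le_of_not_gt fun hxM => (hM x hxM.le).not_ge hx.1⟩
  have hw : sInf S ∈ S := hclosed.csInf_mem ⟨L, hτL, mem_Iic.2 le_rfl⟩ hbdd
  refine ⟨sInf S, hw.2, Subset.antisymm (fun x hx => ⟨csInf_le hbdd hx, hx.2⟩) ?_⟩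
  exact fun x hx => ⟨hw.1.trans (hmono hw.2 hx.2 hx.1), hx.2⟩

theorem norm_integral_Iic_mul_le {f : ℝ → ℂ} {K : ℝ} (hf : Continuous f) (hp : Continuous p)
    (hp0 : ∀ x, 0 ≤ p x) (hmono : MonotoneOn p (Iic L)) (hlim : Tendsto p atBot (𝓝 0))
    (hfp : IntegrableOn (fun x => f x * p x) (Iic L))
    (hK : ∀ w ≤ L, ‖∫ x in w..L, f x‖ ≤ K) :
    ‖∫ x in Iic L, f x * p x‖ ≤ K * p L := by
  have hbound (τ : ℝ) :
      ‖∫ x in {x | τ ∈ Ioc 0 (p x)} ∩ Iic L, f x‖ ≤ (Ioc 0 (p L)).indicator (fun _ => K) τ := by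
    by_cases hτ : τ ∈ Ioc 0 (p L)
    · obtain ⟨w, hwL, hw⟩ := exists_Icc_eq_setOf_le_inter_Iic hp hmono hlim hτ.1 hτ.2
      have hset : {x | τ ∈ Ioc 0 (p x)} = {x | τ ≤ p x} := by ext x; simp [hτ.1]
      rw [indicator_of_mem hτ, hset, hw, integral_Icc_eq_integral_Ioc,
        ← intervalIntegral.integral_of_le hwL]
      exact hK w hwL
    · have hempty : {x | τ ∈ Ioc 0 (p x)} ∩ Iic L = ∅ := eq_empty_of_forall_notMem fun x hx =>
        hτ ⟨hx.1.1, hx.1.2.trans (hmono hx.2 (mem_Iic.2 le_rfl) hx.2)⟩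
      rw [indicator_of_notMem hτ, hempty, Measure.restrict_empty, integral_zero_measure, norm_zero]
  rw [integral_mul_eq_integral_setIntegral_superlevel hf.aestronglyMeasurable hp.measurable hp0 hfp]
  calc _ ≤ ∫ τ, (Ioc 0 (p L)).indicator (fun _ => K) τ := by
        refine norm_integral_le_of_norm_le ((integrable_indicator_iff measurableSet_Ioc).2
          (integrableOn_const measure_Ioc_lt_top.ne)) (ae_of_all _ fun τ => ?_)
        have hS : MeasurableSet {x | τ ∈ Ioc 0 (p x)} :=
          (MeasurableSet.const (0 < τ)).inter (measurableSet_le measurable_const hp.measurable)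
        rw [Measure.restrict_restrict hS]
        exact hbound τ
    _ = K * p L := by
        rw [integral_indicator_const _ measurableSet_Ioc, Real.volume_real_Ioc_of_le (hp0 L),
          sub_zero, smul_eq_mul, mul_comm]

end LayerCake

section HNLS

variable {α β δ : ℝ}

@[fun_prop]
lemma continuous_sHNLS : Continuous (sHNLS α β δ) := by unfold sHNLS; fun_prop

lemma antitoneOn_sHNLS : AntitoneOn (sHNLS α β δ) (Iic (α / (3 * β))) :=
  fun _ _ _ hm' hmm' => Real.sqrt_le_sqrt (by nlinarith [mem_Iic.1 hm'])

lemma cMinus_le (hβ : 0 < β) (lam : ℝ) : cMinus α β δ lam ≤ α / (3 * β) :=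
  div_le_div_of_nonneg_right (sub_le_self _ (Real.sqrt_nonneg _)) (by positivity)

lemma cMinus_sub_le_sHNLS (hβ : 0 < β) {lam m : ℝ} (hm : m ≤ cMinus α β δ lam) :
    cMinus α β δ lam - m ≤ sHNLS α β δ m := by
  set S := Real.sqrt (3 * β ^ 2 * lam ^ 2 + α ^ 2 + 3 * β * δ)
  have hS : 0 ≤ S := Real.sqrt_nonneg _
  have hS2 : 3 * β ^ 2 * lam ^ 2 + α ^ 2 + 3 * β * δ ≤ S ^ 2 := Real.sq_sqrt' ▸ le_max_left _ _
  have hv : S ≤ α - 3 * β * m := by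
    have := (le_div_iff₀ (by positivity : (0:ℝ) < 3 * β)).1 hm
    linarith
  have key : (3 * β) ^ 2 * (3 * (m - α / (3 * β)) ^ 2 - (α ^ 2 + 3 * β * δ) / (3 * β ^ 2)
      - ((α - S) / (3 * β) - m) ^ 2) = 2 * (α - 3 * β * m) ^ 2 + 2 * (α - 3 * β * m) * S - S ^ 2
        - 3 * (α ^ 2 + 3 * β * δ) := by
    field_simp; ring
  -- with `v = α - 3βm ≥ S`: `2v² + 2vS - S² ≥ 3S² ≥ 3(α² + 3βδ)`
  refine (le_abs_self _).trans (Real.abs_le_sqrt (sub_nonneg.1 (nonneg_of_mul_nonneg_right ?_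
    (by positivity : (0 : ℝ) < (3 * β) ^ 2))))
  rw [show cMinus α β δ lam = (α - S) / (3 * β) from rfl, key]
  nlinarith [sq_nonneg (β * lam), mul_nonneg hS (sub_nonneg.2 hv)]

lemma hasDerivAt_phaseHNLS (x y t m : ℝ) :
    HasDerivAt (fun m => phaseHNLS α β δ m x y t)
      (x - y + t * (-24 * β * m ^ 2 + 16 * α * m + 2 * (δ - α ^ 2 / β))) m := by
  have hcubic := ((((hasDerivAt_pow 3 m).const_mul (-8 * β)).fun_add
    ((hasDerivAt_pow 2 m).const_mul (8 * α))).fun_add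
      ((hasDerivAt_id' m).const_mul (2 * (δ - α ^ 2 / β)))).sub_const (α * δ / β)
  refine (((hasDerivAt_id' m).mul_const (x - y)).fun_add (hcubic.const_mul t)).congr_deriv ?_
  push_cast; ring

lemma hasDerivAt_phaseHNLS_deriv (x y t m : ℝ) :
    HasDerivAt (fun m => x - y + t * (-24 * β * m ^ 2 + 16 * α * m + 2 * (δ - α ^ 2 / β)))
      (t * (-48 * β * m + 16 * α)) m := by
  refine ((((((hasDerivAt_pow 2 m).const_mul (-24 * β)).fun_add ((hasDerivAt_id' m).const_mul
    (16 * α))).add_const (2 * (δ - α ^ 2 / β))).const_mul t).const_add (x - y)).congr_deriv ?_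
  push_cast; ring

lemma hasDerivAt_phaseHNLS_deriv2 (t m : ℝ) :
    HasDerivAt (fun m => t * (-48 * β * m + 16 * α)) (-48 * β * t) m :=
  ((((hasDerivAt_id' m).const_mul (-48 * β)).add_const (16 * α)).const_mul t).congr_deriv (by ring)

theorem norm_integral_cexp_phaseHNLS_le (hβ : 0 < β) {x y t a b : ℝ} (ht : t ≠ 0) (hab : a ≤ b) :
    ‖∫ m in a..b, cexp (I * phaseHNLS α β δ m x y t)‖ ≤ 18 * (48 * β * |t|) ^ (-(1 : ℝ) / 3) := by
  refine norm_integral_cexp_le_of_le_abs_deriv3 (hasDerivAt_phaseHNLS x y t)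
    (hasDerivAt_phaseHNLS_deriv x y t) (hasDerivAt_phaseHNLS_deriv2 t) hab (by positivity) ?_
  rcases ht.lt_or_gt with ht | ht
  · exact Or.inl fun m _ => by rw [abs_of_neg ht]; linarith
  · exact Or.inr fun m _ => by rw [abs_of_pos ht]; linarith

variable {z lam : ℝ}

lemma monotoneOn_exp_neg_mul_sHNLS (hβ : 0 < β) (hz : 0 ≤ z) :
    MonotoneOn (fun m => Real.exp (-(z * sHNLS α β δ m))) (Iic (cMinus α β δ lam)) :=
  fun _ hm _ hm' hmm' => Real.exp_le_exp.2 <| neg_le_neg <| mul_le_mul_of_nonneg_left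
    (antitoneOn_sHNLS (Iic_subset_Iic.2 (cMinus_le hβ lam) hm)
      (Iic_subset_Iic.2 (cMinus_le hβ lam) hm') hmm') hz

lemma exp_neg_mul_sHNLS_le (hβ : 0 < β) (hz : 0 ≤ z) {m : ℝ} (hm : m ≤ cMinus α β δ lam) :
    Real.exp (-(z * sHNLS α β δ m)) ≤ Real.exp (z * (m - cMinus α β δ lam)) :=
  Real.exp_le_exp.2 (by nlinarith [cMinus_sub_le_sHNLS hβ hm])

lemma integrableOn_exp_neg_mul_sHNLS (hβ : 0 < β) (hz : 0 < z) :
    IntegrableOn (fun m => Real.exp (-(z * sHNLS α β δ m))) (Iic (cMinus α β δ lam)) := by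
  refine ((integrableOn_exp_mul_Iic hz _).div_const (Real.exp (z * cMinus α β δ lam))).mono'
    (by fun_prop : Continuous fun m => Real.exp (-(z * sHNLS α β δ m))).aestronglyMeasurable
    (ae_restrict_of_forall_mem measurableSet_Iic fun m hm => ?_)
  rw [Real.norm_of_nonneg (Real.exp_pos _).le, ← Real.exp_sub, ← mul_sub]
  exact exp_neg_mul_sHNLS_le hβ hz.le hm

lemma tendsto_exp_neg_mul_sHNLS_atBot (hβ : 0 < β) (hz : 0 < z) :
    Tendsto (fun m => Real.exp (-(z * sHNLS α β δ m))) atBot (𝓝 0) := by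
  -- compare with the linear lower bound on `sHNLS` coming from any `c₋`, say for `λ = 0`
  have hlim : Tendsto (fun m => Real.exp (z * (m - cMinus α β δ 0))) atBot (𝓝 0) :=
    Real.tendsto_exp_atBot.comp
      (Tendsto.const_mul_atBot hz (tendsto_atBot_add_const_right _ _ tendsto_id))
  exact tendsto_of_tendsto_of_tendsto_of_le_of_le' tendsto_const_nhds hlim
    (Eventually.of_forall fun _ => (Real.exp_pos _).le)
    (eventually_le_atBot _ |>.mono fun m hm => exp_neg_mul_sHNLS_le hβ hz.le hm)

end HNLS

theorem kernel_dispersive_bound_general (α β δ : ℝ) (hβ : 0 < β) (lam : ℝ) :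
    ∃ C > 0, ∀ x y z t : ℝ, 0 < x → 0 < z → t ≠ 0 →
      ‖kernelHNLS α β δ lam x y z t‖ ≤ C * |t| ^ (-(1 : ℝ) / 3) := by
  refine ⟨18 * (48 * β) ^ (-(1 : ℝ) / 3), by positivity, fun x y z t _ hz ht => ?_⟩
  set L := cMinus α β δ lam
  set p := fun m => Real.exp (-(z * sHNLS α β δ m))
  have hp : Continuous p := by fun_prop
  have hf : Continuous fun m => cexp (I * phaseHNLS α β δ m x y t) := by unfold phaseHNLS; fun_prop
  have hfp : IntegrableOn (fun m => cexp (I * phaseHNLS α β δ m x y t) * p m) (Iic L) :=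
    (integrableOn_exp_neg_mul_sHNLS hβ hz).ofReal.bdd_mul hf.aestronglyMeasurable
      (ae_of_all _ fun m => (norm_cexp_I_mul_ofReal _).le)
  have hpL : p L ≤ 1 := Real.exp_le_one_iff.2 (neg_nonpos.2 (mul_nonneg hz.le (Real.sqrt_nonneg _)))
  calc ‖kernelHNLS α β δ lam x y z t‖ ≤ 18 * (48 * β * |t|) ^ (-(1 : ℝ) / 3) * p L :=
        norm_integral_Iic_mul_le hf hp (fun _ => (Real.exp_pos _).le)
          (monotoneOn_exp_neg_mul_sHNLS hβ hz.le) (tendsto_exp_neg_mul_sHNLS_atBot hβ hz) hfp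
          fun w hw => norm_integral_cexp_phaseHNLS_le hβ ht hw
    _ ≤ 18 * (48 * β * |t|) ^ (-(1 : ℝ) / 3) := mul_le_of_le_one_right (by positivity) hpL
    _ = 18 * (48 * β) ^ (-(1 : ℝ) / 3) * |t| ^ (-(1 : ℝ) / 3) := by
        rw [Real.mul_rpow (by positivity) (abs_nonneg t)]; ring

/-- Dispersive estimate for the boundary kernel: `|K(x, y, z, t)| ≤ C |t|^{−1/3}` for `t ≠ 0`,
uniformly in `x, z > 0` and `y ∈ ℝ`. -/
theorem kernel_dispersive_bound (α β δ : ℝ) (hβ : 0 < β) (lam : ℝ)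
    (hlam0 : 0 ≤ lam)
    (hlam1 : 0 < α ^ 2 + 3 * β * δ → lam = 0)
    (hlam2 : α ^ 2 + 3 * β * δ ≤ 0 →
      2 * Real.sqrt (-(α ^ 2 + 3 * β * δ)) / (3 * β) < lam) :
    ∃ C > 0, ∀ x y z t : ℝ, 0 < x → 0 < z → t ≠ 0 →
      ‖kernelHNLS α β δ lam x y z t‖ ≤ C * |t| ^ (-(1 : ℝ) / 3) :=
  kernel_dispersive_bound_general α β δ hβ lam
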